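/- arXiv:2208.00327 — 4 statements merged into one kernel-verified Lean document; each statement's English description precedes it below -/
import Mathlib

section
/- Glynn's formula: For every m×m complex matrix A = (a_{ij}), Per(A) = 2^{-m} · Σ_{x ∈ {-1,1}^m} x_1⋯x_m · ∏_{i=1}^m ( Σ_{j=1}^m a_{ij} x_j ). -/
open BigOperators Matrix

namespace GlynnAux

lemma coe_cases (v : ({-1, 1} : Finset ℤ)) : (v : ℤ) = -1 ∨ (v : ℤ) = 1 := by
  have h := v.2
  simp only [Finset.mem_insert, Finset.mem_singleton] at h
  exact h

lemma coe_sq (v : ({-1, 1} : Finset ℤ)) : (((v : ℤ)) : ℂ) * (((v : ℤ)) : ℂ) = 1 := by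
  rcases coe_cases v with h | h <;> rw [h] <;> norm_num

/-- negation on the sign set -/
def neg (v : ({-1, 1} : Finset ℤ)) : ({-1, 1} : Finset ℤ) :=
  ⟨-(v : ℤ), by rcases coe_cases v with h | h <;> rw [h] <;> decide⟩

lemma neg_neg (v : ({-1, 1} : Finset ℤ)) : neg (neg v) = v := by
  apply Subtype.ext
  simp [neg]

lemma coe_neg (v : ({-1, 1} : Finset ℤ)) : (((neg v : ℤ)) : ℂ) = -(((v : ℤ)) : ℂ) := by
  simp [neg]

lemma key (m : ℕ) (f : Fin m → Fin m) :
    ∑ x : Fin m → ({-1, 1} : Finset ℤ),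
        (∏ i, ((x i : ℤ) : ℂ)) * ∏ i, ((x (f i) : ℤ) : ℂ) =
      if Function.Bijective f then (2 : ℂ) ^ m else 0 := by
  split_ifs with hf
  · have h1 : ∀ x : Fin m → ({-1, 1} : Finset ℤ),
        (∏ i, ((x i : ℤ) : ℂ)) * ∏ i, ((x (f i) : ℤ) : ℂ) = 1 := by
      intro x
      have h2 : ∏ i, ((x (f i) : ℤ) : ℂ) = ∏ i, ((x i : ℤ) : ℂ) :=
        Fintype.prod_bijective f hf _ _ (fun i => rfl)
      rw [h2, ← Finset.prod_mul_distrib]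
      exact Finset.prod_eq_one fun i _ => coe_sq (x i)
    rw [Finset.sum_congr rfl (fun x _ => h1 x)]
    simp only [Finset.sum_const, Finset.card_univ, nsmul_eq_mul, mul_one]
    rw [Fintype.card_fun]
    norm_num
  · -- f is not surjective
    have hns : ¬ Function.Surjective f := fun hs => hf (Finite.surjective_iff_bijective.mp hs)
    rw [Function.Surjective] at hns
    push_neg at hns
    obtain ⟨j₀, hj₀⟩ := hns
    set F : (Fin m → ({-1, 1} : Finset ℤ)) → ℂ := fun x =>
      (∏ i, ((x i : ℤ) : ℂ)) * ∏ i, ((x (f i) : ℤ) : ℂ) with hF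
    have hinv : Function.Involutive
        (fun x : Fin m → ({-1, 1} : Finset ℤ) => Function.update x j₀ (neg (x j₀))) := by
      intro x
      simp [Function.update_self, neg_neg, Function.update_idem]
    set e := hinv.toPerm
    have hkey : ∀ x, F (e x) = -F x := by
      intro x
      have hfst : ∏ i, (((Function.update x j₀ (neg (x j₀)) i : ℤ)) : ℂ) =
          -(∏ i, ((x i : ℤ) : ℂ)) := by
        rw [← Finset.mul_prod_erase _ _ (Finset.mem_univ j₀),
          ← Finset.mul_prod_erase _ (fun i => ((x i : ℤ) : ℂ)) (Finset.mem_univ j₀),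
          Function.update_self, coe_neg]
        have herase : ∏ i ∈ Finset.univ.erase j₀,
            (((Function.update x j₀ (neg (x j₀)) i : ℤ)) : ℂ) =
            ∏ i ∈ Finset.univ.erase j₀, ((x i : ℤ) : ℂ) :=
          Finset.prod_congr rfl fun i hi => by
            rw [Function.update_of_ne (Finset.ne_of_mem_erase hi)]
        rw [herase]
        ring
      have hsnd : ∏ i, (((Function.update x j₀ (neg (x j₀)) (f i) : ℤ)) : ℂ) =
          ∏ i, ((x (f i) : ℤ) : ℂ) := by
        apply Finset.prod_congr rfl
        intro i _
        rw [Function.update_of_ne (hj₀ i)]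
      show (∏ i, (((Function.update x j₀ (neg (x j₀)) i : ℤ)) : ℂ)) *
          ∏ i, (((Function.update x j₀ (neg (x j₀)) (f i) : ℤ)) : ℂ) = -F x
      rw [hfst, hsnd, hF]
      ring
    have h2 : ∑ x, F x = -∑ x, F x := by
      conv_lhs => rw [← Equiv.sum_comp e F]
      rw [Finset.sum_congr rfl (fun x _ => hkey x), Finset.sum_neg_distrib]
    linear_combination h2 / 2

end GlynnAux

/-- **Glynn's formula.** -/
theorem glynn_formula (m : ℕ) (A : Matrix (Fin m) (Fin m) ℂ) :
    A.permanent =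
      (1 / 2 ^ m : ℂ) *
        ∑ x : Fin m → ({-1, 1} : Finset ℤ),
          (∏ i, ((x i : ℤ) : ℂ)) * ∏ i, ∑ j, A i j * ((x j : ℤ) : ℂ) := by
  have expand : ∀ x : Fin m → ({-1, 1} : Finset ℤ),
      ∏ i, ∑ j, A i j * ((x j : ℤ) : ℂ) =
        ∑ f : Fin m → Fin m, ∏ i, A i (f i) * ((x (f i) : ℤ) : ℂ) := by
    intro x
    rw [Finset.prod_univ_sum (fun _ => (Finset.univ : Finset (Fin m)))
      (fun i j => A i j * ((x j : ℤ) : ℂ)), Fintype.piFinset_univ]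
  calc A.permanent
      = ∑ f ∈ Finset.univ.filter Function.Bijective, ∏ i, A i (f i) := by
        rw [Matrix.permanent]
        refine Finset.sum_nbij' (fun σ => ⇑σ⁻¹)
          (fun g => if h : Function.Bijective g then (Equiv.ofBijective g h)⁻¹ else 1)
          ?_ ?_ ?_ ?_ ?_
        · intro σ _
          simp only [Finset.mem_filter, Finset.mem_univ, true_and]
          exact (σ⁻¹).bijective
        · intro g _
          exact Finset.mem_univ _
        · intro σ _
          rw [dif_pos (σ⁻¹).bijective]
          have : Equiv.ofBijective (⇑σ⁻¹) (σ⁻¹).bijective = σ⁻¹ :=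
            DFunLike.coe_injective rfl
          rw [this, inv_inv]
        · intro g hg
          have hb : Function.Bijective g := (Finset.mem_filter.mp hg).2
          rw [dif_pos hb, inv_inv]
          rfl
        · intro σ _
          calc ∏ i, A (σ i) i = ∏ i, A (σ i) (σ⁻¹ (σ i)) := by simp
            _ = ∏ i, A i (σ⁻¹ i) := Equiv.prod_comp σ (fun i => A i (σ⁻¹ i))
    _ = (1 / 2 ^ m : ℂ) * ∑ f : Fin m → Fin m, (∏ i, A i (f i)) *
          (if Function.Bijective f then (2 : ℂ) ^ m else 0) := by
        rw [Finset.mul_sum]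
        rw [Finset.sum_filter]
        apply Finset.sum_congr rfl
        intro f _
        split_ifs with hf <;> simp
        rw [mul_comm (∏ i, A i (f i)), ← mul_assoc]
        norm_num
    _ = (1 / 2 ^ m : ℂ) *
        ∑ x : Fin m → ({-1, 1} : Finset ℤ),
          (∏ i, ((x i : ℤ) : ℂ)) * ∏ i, ∑ j, A i j * ((x j : ℤ) : ℂ) := by
        congr 1
        have hR : ∀ x : Fin m → ({-1, 1} : Finset ℤ),
            (∏ i, ((x i : ℤ) : ℂ)) * ∏ i, ∑ j, A i j * ((x j : ℤ) : ℂ) =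
            ∑ f : Fin m → Fin m,
              (∏ i, ((x i : ℤ) : ℂ)) * ∏ i, A i (f i) * ((x (f i) : ℤ) : ℂ) := by
          intro x
          rw [expand x, Finset.mul_sum]
        rw [Finset.sum_congr rfl (fun x _ => hR x), Finset.sum_comm]
        apply Finset.sum_congr rfl
        intro f _
        rw [← GlynnAux.key m f, Finset.mul_sum]
        apply Finset.sum_congr rfl
        intro x _
        rw [Finset.prod_mul_distrib]
        ring
end

section
/- Glynn's formula with repeated rows: For every n×n complex matrix A = (a_{ij}) and every q = (q_1,…,q_n) ∈ ℕ^n, Per(A_{q,𝟏}) = δ_{|q|,n} · 2^{-n} · Σ_{x ∈ {-1,1}^n} x_1⋯x_n · ∏_{i=1}^n ( Σ_{j=1}^n a_{ij} x_j )^{q_i}, where δ is the Kronecker symbol and 𝟏 = (1,…,1). -/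
open BigOperators Matrix

/-- The list of row indices of `A_{p,·}`: each index `i` repeated `p i` times, in order. -/
def repList {m : ℕ} (p : Fin m → ℕ) : List (Fin m) :=
  (List.finRange m).flatMap fun i => List.replicate (p i) i

lemma repList_length {m : ℕ} (p : Fin m → ℕ) : (repList p).length = ∑ i, p i := by
  simp only [repList, List.length_flatMap, Fin.sum_univ_def]
  congr 1
  apply List.map_congr_left
  intro i _
  simp

/-- The matrix `A_{p,q}`: row `i` repeated `p i` times, column `j` repeated `q j` times. -/
def repMat {m : ℕ} (A : Matrix (Fin m) (Fin m) ℂ) (p q : Fin m → ℕ) :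
    Matrix (Fin (∑ i, p i)) (Fin (∑ j, q j)) ℂ :=
  Matrix.of fun r c =>
    A ((repList p).get (Fin.cast (repList_length p).symm r))
      ((repList q).get (Fin.cast (repList_length q).symm c))

/-- `Per(A_{p,q})`; by convention `0` when the matrix is not square. -/
noncomputable def perRep {m : ℕ} (A : Matrix (Fin m) (Fin m) ℂ) (p q : Fin m → ℕ) : ℂ :=
  if h : (∑ i, p i) = (∑ j, q j) then
    (Matrix.of fun r c : Fin (∑ i, p i) => repMat A p q r (Fin.cast h c)).permanent
  else 0

/-!
Expanding `∏ᵢ ∑ⱼ bᵢⱼ xⱼ` over all maps `f : ι → ι`, the average over sign vectors of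
`x₁⋯xₙ · ∏ᵢ x_{f i} = ∏ⱼ xⱼ ^ (1 + #f⁻¹(j))` is `1` when every fibre of `f` is a singleton and
`0` as soon as one fibre is empty; for a self-map of a finite set these are the permutations and
the non-permutations, so the sign sum is `2ⁿ · Per(B)` (Glynn). Taking for `B` the square matrix
whose rows are the rows of `A`, row `i` repeated `qᵢ` times, the product over its rows is
`∏ᵢ (∑ⱼ aᵢⱼ xⱼ) ^ qᵢ`.
-/

open Finset Function

lemma Fintype.prod_comp_eq_prod_pow_card_fiber {ι κ M : Type*} [Fintype ι] [Fintype κ]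
    [DecidableEq κ] [CommMonoid M] (g : ι → κ) (f : κ → M) :
    ∏ i, f (g i) = ∏ j, f j ^ #{i | g i = j} := by
  simp_rw [← Finset.prod_fiberwise' univ g f, prod_const]

section Glynn

variable {R ι : Type*} [CommRing R] [Fintype ι] [DecidableEq ι]

lemma sum_sign_pow (m : ℕ) :
    ∑ y : ({-1, 1} : Finset ℤ), ((y : ℤ) : R) ^ m = (-1) ^ m + 1 := by
  rw [sum_coe_sort _ fun z : ℤ => (z : R) ^ m, sum_pair (by norm_num)]
  push_cast
  rw [one_pow]

lemma sum_signVectors_prod_pow (m : ι → ℕ) :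
    ∑ x : ι → ({-1, 1} : Finset ℤ), ∏ j, ((x j : ℤ) : R) ^ m j = ∏ j, ((-1) ^ m j + 1) := by
  simp_rw [← sum_sign_pow, Fintype.prod_sum]

lemma sum_signVectors_prod_mul_prod_comp (f : ι → ι) :
    ∑ x : ι → ({-1, 1} : Finset ℤ), (∏ j, ((x j : ℤ) : R)) * ∏ i, ((x (f i) : ℤ) : R)
      = if Bijective f then 2 ^ Fintype.card ι else 0 := by
  have hpow : ∀ x : ι → ({-1, 1} : Finset ℤ),
      (∏ j, ((x j : ℤ) : R)) * ∏ i, ((x (f i) : ℤ) : R)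
        = ∏ j, ((x j : ℤ) : R) ^ (#{i | f i = j} + 1) := fun x => by
    rw [Fintype.prod_comp_eq_prod_pow_card_fiber f fun j => ((x j : ℤ) : R), ← prod_mul_distrib]
    simp_rw [pow_succ']
  simp_rw [hpow, sum_signVectors_prod_pow]
  split_ifs with hf
  · have hfiber (j : ι) : #{i | f i = j} = 1 :=
      (Fintype.existsUnique_iff_card_one _).mp (hf.existsUnique j)
    simp only [hfiber]
    norm_num
  · obtain ⟨j, hj⟩ : ∃ j, ∀ i, f i ≠ j := by
      simpa [Surjective] using mt Finite.surjective_iff_bijective.mp hf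
    refine prod_eq_zero (mem_univ j) ?_
    rw [card_eq_zero.mpr (filter_eq_empty_iff.mpr fun i _ => hj i)]
    norm_num

theorem glynn_sum_eq_two_pow_card_mul_permanent (B : Matrix ι ι R) :
    ∑ x : ι → ({-1, 1} : Finset ℤ), (∏ j, ((x j : ℤ) : R)) * ∏ i, ∑ j, B i j * ((x j : ℤ) : R)
      = 2 ^ Fintype.card ι * B.permanent := by
  calc _ = ∑ f : ι → ι, (∏ i, B i (f i)) * ∑ x : ι → ({-1, 1} : Finset ℤ),
              (∏ j, ((x j : ℤ) : R)) * ∏ i, ((x (f i) : ℤ) : R) := by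
          simp_rw [Fintype.prod_sum, mul_sum, prod_mul_distrib]
          rw [sum_comm]
          simp_rw [mul_left_comm]
    _ = ∑ f : ι → ι, if Bijective f then 2 ^ Fintype.card ι * ∏ i, B i (f i) else 0 := by
          simp_rw [sum_signVectors_prod_mul_prod_comp, mul_ite, mul_zero, mul_comm]
    _ = 2 ^ Fintype.card ι * ∑ σ : Equiv.Perm ι, ∏ i, B i (σ i) := by
          rw [← sum_filter, mul_sum, sum_subtype _ (p := Bijective) (by simp)]
          exact Fintype.sum_equiv Equiv.bijectiveEquiv _ _ fun _ => rfl
    _ = 2 ^ Fintype.card ι * B.permanent := by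
          rw [← permanent_transpose]
          rfl

end Glynn

theorem Matrix.permanent_submatrix_equiv_self {R m n : Type*} [CommSemiring R]
    [Fintype m] [DecidableEq m] [Fintype n] [DecidableEq n] (e : n ≃ m) (A : Matrix m m R) :
    (A.submatrix e e).permanent = A.permanent :=
  Fintype.sum_equiv e.permCongr _ _ fun σ =>
    Fintype.prod_equiv e _ _ fun i => by simp [Equiv.permCongr_apply]

section RepeatedRows

variable {m : ℕ}

def repIndex (q : Fin m → ℕ) (r : Fin (∑ i, q i)) : Fin m :=
  (repList q).get (Fin.cast (repList_length q).symm r)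

lemma prod_repIndex {M : Type*} [CommMonoid M] (q : Fin m → ℕ) (F : Fin m → M) :
    ∏ r, F (repIndex q r) = ∏ i, F i ^ q i := by
  have hlist : ((repList q).map F).prod = ∏ i, F i ^ q i := by
    rw [repList, List.map_flatMap, List.flatMap, List.prod_flatten, List.map_map,
      Fin.prod_univ_def]
    simp [Function.comp_def]
  rw [← hlist, ← Fin.prod_univ_fun_getElem (repList q) F]
  exact Fintype.prod_equiv (finCongr (repList_length q).symm) _ _ fun r => rfl

lemma repIndex_one (c : Fin (∑ _ : Fin m, 1)) :
    repIndex (fun _ : Fin m => 1) c = Fin.cast (by simp) c := by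
  ext
  simp [repIndex, repList]
  rfl

lemma repMat_apply (A : Matrix (Fin m) (Fin m) ℂ) (p q : Fin m → ℕ) (r : Fin (∑ i, p i))
    (c : Fin (∑ j, q j)) : repMat A p q r c = A (repIndex p r) (repIndex q c) := rfl

lemma perRep_one_of_sum_eq (A : Matrix (Fin m) (Fin m) ℂ) (q : Fin m → ℕ) (h : ∑ i, q i = m) :
    perRep A q (fun _ => 1)
      = (Matrix.of fun r c => A (repIndex q (Fin.cast h.symm r)) c).permanent := by
  rw [perRep, dif_pos (by simpa using h), ← permanent_submatrix_equiv_self (finCongr h)]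
  congr 1
  ext r c
  simp [repMat_apply, repIndex_one]

end RepeatedRows

/-- **Glynn's formula with repeated rows.** -/
theorem glynn_formula_repeated_rows (n : ℕ) (A : Matrix (Fin n) (Fin n) ℂ) (q : Fin n → ℕ) :
    perRep A q (fun _ => 1) =
      (if (∑ i, q i) = n then (1 : ℂ) else 0) * (1 / 2 ^ n : ℂ) *
        ∑ x : Fin n → ({-1, 1} : Finset ℤ),
          (∏ i, ((x i : ℤ) : ℂ)) * ∏ i, (∑ j, A i j * ((x j : ℤ) : ℂ)) ^ q i := by
  by_cases h : ∑ i, q i = n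
  · rw [perRep_one_of_sum_eq A q h, if_pos h]
    set B : Matrix (Fin n) (Fin n) ℂ := Matrix.of fun r c => A (repIndex q (Fin.cast h.symm r)) c
    have hrows (x : Fin n → ({-1, 1} : Finset ℤ)) :
        ∏ i, (∑ j, A i j * ((x j : ℤ) : ℂ)) ^ q i = ∏ r, ∑ j, B r j * ((x j : ℤ) : ℂ) := by
      rw [← prod_repIndex, ← (finCongr h).prod_comp]
      rfl
    simp_rw [hrows, glynn_sum_eq_two_pow_card_mul_permanent, Fintype.card_fin]
    field_simp
  · rw [perRep, dif_neg (by simpa using h), if_neg h, zero_mul, zero_mul]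
end

section
/- Jackson's formula: For every m×m complex matrix A and all x, y ∈ ℂ^m, the series Σ_{n=0}^∞ c_n, where c_n = Σ_{p,q ∈ ℕ^m, |p| = |q| = n} (x^p y^q / (p! q!)) · Per(A_{p,q}) (a finite sum for each n), converges to exp(x^T A y), where x^T A y = Σ_{i,j} x_i a_{ij} y_j. -/
open BigOperators Matrix

/-!
Fix row multiplicities `p` with `|p| = n` and let `r : Fin n → Fin m` be the row-selection map
of `A_{p,·}`. Expanding `y^q Per(A_{p,q})` over permutations gives `∑_σ F (c ∘ σ)` with
`F g = ∏_k a_{r k, g k} y_{g k}` and `c` the column-selection map. Exactly `q!` permutations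
send `c` to a given `g` with fibre sizes `q`, so dividing by `q!` and summing over `q` yields
`∑_g F g = ∏_i ((A y)_i)^{p_i}`. The sum over `p` is then `(xᵀ A y)^n / n!` by the multinomial
theorem: the `n`-th term of the exponential series.
-/

open Finset Nat

section FiberCard

variable {α ι : Type*} [Fintype α] [DecidableEq ι]

def fiberCard (f : α → ι) (j : ι) : ℕ := #{k | f k = j}

lemma fiberCard_comp_equiv {β : Type*} [Fintype β] (f : α → ι) (e : β ≃ α) :
    fiberCard (f ∘ e) = fiberCard f := by
  funext j
  exact card_equiv e fun k => by simp

lemma sum_fiberCard [Fintype ι] (f : α → ι) : ∑ j, fiberCard f j = Fintype.card α :=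
  (card_eq_sum_card_fiberwise fun _ _ => mem_univ _).symm

lemma prod_comp_eq_prod_pow_fiberCard [Fintype ι] {M : Type*} [CommMonoid M] (f : α → ι)
    (F : ι → M) : ∏ k, F (f k) = ∏ j, F j ^ fiberCard f j := by
  rw [Finset.prod_comp, prod_subset (subset_univ _)]
  · rfl
  · intro j _ hj
    simp_all

end FiberCard

lemma fiberCard_get {α : Type*} [DecidableEq α] (l : List α) (a : α) :
    fiberCard l.get a = l.count a := by
  have hl : (l : Multiset α) = univ.val.map l.get := by rw [Fin.univ_val_map, List.ofFn_get]
  rw [← Multiset.coe_count, hl, Multiset.count_map, fiberCard, card_def, filter_val]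
  simp only [eq_comm]

section PermComp

variable {α ι : Type*} [Fintype α] [DecidableEq α] [Fintype ι] [DecidableEq ι]

def permCompEqEquiv (c g : α → ι) :
    {σ : Equiv.Perm α // c ∘ σ = g} ≃ ∀ j, ({k // g k = j} ≃ {k // c k = j}) where
  toFun σ j := σ.1.subtypeEquiv fun k => by rw [← congrFun σ.2 k]; rfl
  invFun e := ⟨Equiv.ofFiberEquiv e, funext (Equiv.ofFiberEquiv_map e)⟩
  left_inv σ := rfl
  right_inv e := by
    funext j
    ext ⟨k, rfl⟩
    rfl

lemma card_perm_comp_eq (c g : α → ι) :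
    #{σ : Equiv.Perm α | c ∘ σ = g} =
      if fiberCard g = fiberCard c then ∏ j, (fiberCard c j)! else 0 := by
  have hcard : ∀ (f : α → ι) j, Fintype.card {k // f k = j} = fiberCard f j := fun f j =>
    Fintype.card_subtype _
  rw [← Fintype.card_subtype, Fintype.card_congr (permCompEqEquiv c g), Fintype.card_pi]
  split_ifs with h
  · refine prod_congr rfl fun j _ => ?_
    rw [Fintype.card_equiv (Fintype.equivOfCardEq (by rw [hcard, hcard, h])), hcard, h]
  · obtain ⟨j, hj⟩ := Function.ne_iff.mp h
    refine prod_eq_zero (mem_univ j) (Fintype.card_eq_zero_iff.mpr ⟨fun e => hj ?_⟩)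
    rw [← hcard, ← hcard, Fintype.card_congr e]

lemma sum_perm_comp {R : Type*} [AddCommMonoid R] (c : α → ι) (F : (α → ι) → R) :
    ∑ σ : Equiv.Perm α, F (c ∘ σ) =
      (∏ j, (fiberCard c j)!) • ∑ g with fiberCard g = fiberCard c, F g := by
  rw [← sum_fiberwise univ (fun σ : Equiv.Perm α => c ∘ σ), sum_filter, smul_sum]
  refine sum_congr rfl fun g _ => ?_
  rw [sum_congr rfl fun σ hσ => congrArg F (mem_filter.mp hσ).2, sum_const, card_perm_comp_eq]
  split_ifs <;> simp

end PermComp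

section RepeatedMatrix

variable {m : ℕ}

def repIdx (p : Fin m → ℕ) (k : Fin (∑ i, p i)) : Fin m :=
  (repList p).get (Fin.cast (repList_length p).symm k)

lemma fiberCard_repIdx (p : Fin m → ℕ) : fiberCard (repIdx p) = p := by
  funext i
  change fiberCard ((repList p).get ∘ finCongr (repList_length p).symm) i = p i
  rw [fiberCard_comp_equiv, fiberCard_get]
  simp [repList, List.count_flatMap, List.count_replicate, ← Fin.sum_univ_def]

lemma perRep_eq_sum_perm (A : Matrix (Fin m) (Fin m) ℂ) (p q : Fin m → ℕ)
    (h : ∑ i, p i = ∑ j, q j) :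
    perRep A p q = ∑ σ : Equiv.Perm (Fin (∑ i, p i)),
      ∏ k, A (repIdx p k) (repIdx q (Fin.cast h (σ k))) := by
  rw [perRep, dif_pos h, ← Matrix.permanent_transpose]
  rfl

lemma sum_antidiagonalTuple_mul_perRep (A : Matrix (Fin m) (Fin m) ℂ) (y : Fin m → ℂ)
    (p : Fin m → ℕ) :
    ∑ q ∈ Nat.antidiagonalTuple m (∑ i, p i),
      (∏ j, y j ^ q j) / (∏ j, ((q j)! : ℂ)) * perRep A p q =
      ∏ i, (∑ j, A i j * y j) ^ p i := by
  set F : (Fin (∑ i, p i) → Fin m) → ℂ := fun g => ∏ k, A (repIdx p k) (g k) * y (g k)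
  have hterm : ∀ q ∈ Nat.antidiagonalTuple m (∑ i, p i),
      (∏ j, y j ^ q j) / (∏ j, ((q j)! : ℂ)) * perRep A p q =
        ∑ g with fiberCard g = q, F g := by
    intro q hq
    have h : ∑ i, p i = ∑ j, q j := (Nat.mem_antidiagonalTuple.mp hq).symm
    set c := repIdx q ∘ finCongr h
    have hc : fiberCard c = q := by rw [fiberCard_comp_equiv _ (finCongr h), fiberCard_repIdx]
    have hy : ∏ j, y j ^ q j = ∏ k, y (c k) := by rw [prod_comp_eq_prod_pow_fiberCard, hc]
    have hperm : (∏ j, y j ^ q j) * perRep A p q = ∑ σ : Equiv.Perm _, F (c ∘ σ) := by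
      rw [perRep_eq_sum_perm A p q h, mul_sum]
      refine sum_congr rfl fun σ _ => ?_
      rw [hy, ← Equiv.prod_comp σ (fun k => y (c k)), ← prod_mul_distrib]
      exact prod_congr rfl fun k _ => mul_comm _ _
    have hfac : ∏ j, ((q j)! : ℂ) ≠ 0 :=
      prod_ne_zero_iff.mpr fun j _ => Nat.cast_ne_zero.mpr (factorial_ne_zero _)
    rw [div_mul_eq_mul_div, hperm, sum_perm_comp, hc, nsmul_eq_mul, Nat.cast_prod,
      mul_div_cancel_left₀ _ hfac]
  rw [sum_congr rfl hterm, sum_fiberwise_of_maps_to fun g _ =>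
      Nat.mem_antidiagonalTuple.mpr (by rw [sum_fiberCard, Fintype.card_fin]),
    ← Fintype.prod_sum (fun k j => A (repIdx p k) j * y j),
    prod_comp_eq_prod_pow_fiberCard (repIdx p) fun i => ∑ j, A i j * y j, fiberCard_repIdx]

end RepeatedMatrix

lemma sum_antidiagonalTuple_prod_pow_div_factorial {K : Type*} [Field K] [CharZero K] {m : ℕ}
    (v : Fin m → K) (n : ℕ) :
    ∑ p ∈ Nat.antidiagonalTuple m n, (∏ i, v i ^ p i) / ∏ i, ((p i)! : K) =
      (∑ i, v i) ^ n / n ! := by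
  rw [sum_pow_eq_sum_piAntidiag, piAntidiag_univ_fin_eq_antidiagonalTuple, sum_div]
  refine sum_congr rfl fun p hp => ?_
  have hspec : (∏ i, ((p i)! : K)) * multinomial univ p = n ! := by
    rw [← Nat.mem_antidiagonalTuple.mp hp]
    exact_mod_cast multinomial_spec univ p
  have hmul : (multinomial univ p : K) ≠ 0 := Nat.cast_ne_zero.mpr (multinomial_pos _ _).ne'
  rw [← hspec, mul_comm _ (multinomial univ p : K), mul_div_mul_left _ _ hmul]

lemma sum_antidiagonalTuple_perRep_eq_pow_div_factorial {m : ℕ} (A : Matrix (Fin m) (Fin m) ℂ)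
    (x y : Fin m → ℂ) (n : ℕ) :
    ∑ p ∈ Nat.antidiagonalTuple m n, ∑ q ∈ Nat.antidiagonalTuple m n,
      (∏ i, x i ^ p i) * (∏ j, y j ^ q j) / ((∏ i, ((p i)! : ℂ)) * ∏ j, ((q j)! : ℂ)) *
        perRep A p q =
      (∑ i, ∑ j, x i * A i j * y j) ^ n / n ! := by
  set w : Fin m → ℂ := fun i => ∑ j, A i j * y j
  calc _ = ∑ p ∈ Nat.antidiagonalTuple m n,
        (∏ i, (x i * w i) ^ p i) / ∏ i, ((p i)! : ℂ) := by
        refine sum_congr rfl fun p hp => ?_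
        have hsplit : ∀ q : Fin m → ℕ,
            (∏ i, x i ^ p i) * (∏ j, y j ^ q j) /
                ((∏ i, ((p i)! : ℂ)) * ∏ j, ((q j)! : ℂ)) * perRep A p q =
            (∏ i, x i ^ p i) / (∏ i, ((p i)! : ℂ)) *
              ((∏ j, y j ^ q j) / (∏ j, ((q j)! : ℂ)) * perRep A p q) := fun q => by ring
        rw [sum_congr rfl fun q _ => hsplit q, ← mul_sum, ← Nat.mem_antidiagonalTuple.mp hp,
          sum_antidiagonalTuple_mul_perRep, div_mul_eq_mul_div, ← prod_mul_distrib]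
        simp only [w, mul_pow]
    _ = (∑ i, x i * w i) ^ n / n ! := sum_antidiagonalTuple_prod_pow_div_factorial _ n
    _ = _ := by simp only [w, mul_sum, mul_assoc]

/-- **Jackson's formula.** -/
theorem jackson_formula (m : ℕ) (A : Matrix (Fin m) (Fin m) ℂ) (x y : Fin m → ℂ) :
    Filter.Tendsto
      (fun N => ∑ n ∈ Finset.range N,
        ∑ p ∈ Finset.Nat.antidiagonalTuple m n,
          ∑ q ∈ Finset.Nat.antidiagonalTuple m n,
            (∏ i, x i ^ p i) * (∏ j, y j ^ q j) /
                ((∏ i, (Nat.factorial (p i) : ℂ)) * ∏ j, (Nat.factorial (q j) : ℂ)) *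
              perRep A p q)
      Filter.atTop
      (nhds (Complex.exp (∑ i, ∑ j, x i * A i j * y j))) := by
  rw [Complex.exp_eq_exp_ℂ]
  refine (NormedSpace.expSeries_div_hasSum_exp _).tendsto_sum_nat.congr fun N => ?_
  exact sum_congr rfl fun n _ => (sum_antidiagonalTuple_perRep_eq_pow_div_factorial A x y n).symm
end

section
/- Derivative form of the generating-function theorem: Let f : ℂ → ℂ be an entire function, let A be an m×m complex matrix, let n ∈ ℕ, and let p, q ∈ ℕ^m with |p| = |q| = n. Then the iterated partial derivative ∂_{x_1}^{p_1} ⋯ ∂_{x_m}^{p_m} ∂_{y_1}^{q_1} ⋯ ∂_{y_m}^{q_m} of the function (x,y) ↦ f(x^T A y), evaluated at x = y = 0, equals Per(A_{p,q}) · f^{(n)}(0), where f^{(n)} is the n-th derivative of f and x^T A y = Σ_{i,j} x_i a_{ij} y_j. -/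
open BigOperators Matrix

/-- The partial derivative of `F : (α → ℂ) → ℂ` in the `i`-th coordinate. -/
noncomputable def pderivAt {α : Type*} [DecidableEq α] (i : α) (F : (α → ℂ) → ℂ) :
    (α → ℂ) → ℂ :=
  fun v => deriv (fun t => F (Function.update v i t)) (v i)

/-- The iterated partial derivative `∂^{p i₁} ∂^{p i₂} ⋯` taken along the list `l`. -/
noncomputable def multiPDeriv {α : Type*} [DecidableEq α] (l : List α) (p : α → ℕ)
    (F : (α → ℂ) → ℂ) : (α → ℂ) → ℂ :=
  l.foldr (fun i G => (pderivAt i)^[p i] G) F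

/-!
Write `xᵀ A y = ∑ⱼ ℓⱼ(x) yⱼ` with the linear forms `ℓⱼ(x) = (xᵀ A)ⱼ`. Each `y`-derivative of
`f (xᵀ A y)` pulls out one factor `ℓⱼ(x)` and raises the order of the derivative of `f`, so the
`y`-derivatives produce `(∏ ℓ_{j_b}(x)) · f^{(n)}(xᵀ A y)`. The `x`-derivatives never move `y`,
so `y = 0` may be substituted first, leaving `f^{(n)}(0)` times a product of `n` linear forms.
Differentiating such a product along `n` coordinates yields the permanent of its coefficient
matrix: by the product rule, the first derivative taken reproduces the Laplace expansion of the
permanent along a column.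
-/

open scoped ContDiff

namespace Matrix

theorem permanent_succ_column_zero {R : Type*} [CommSemiring R] {n : ℕ}
    (M : Matrix (Fin (n + 1)) (Fin (n + 1)) R) :
    M.permanent = ∑ i, M i 0 * (M.submatrix i.succAbove Fin.succ).permanent := by
  rw [permanent, Finset.univ_perm_fin_succ, ← Finset.univ_product_univ]
  simp only [Finset.sum_map, Equiv.toEmbedding_apply, Finset.sum_product]
  refine Finset.sum_congr rfl fun i _ => Fin.cases ?_ (fun i => ?_) i
  · simp [Fin.prod_univ_succ, permanent, Finset.mul_sum,
      Equiv.Perm.decomposeFin_symm_apply_zero, Equiv.Perm.decomposeFin_symm_apply_succ]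
  · -- `decomposeFin` inserts `i.succ` through a swap, which differs from `succAbove` by a cycle
    rw [← permanent_permute_cols i.cycleRange, permanent, Finset.mul_sum]
    refine Finset.sum_congr rfl fun σ _ => ?_
    simp [Fin.prod_univ_succ, Equiv.Perm.decomposeFin_symm_apply_zero,
      Equiv.Perm.decomposeFin_symm_apply_succ, Fin.succAbove_cycleRange]

theorem permanent_succ_column_last {R : Type*} [CommSemiring R] {n : ℕ}
    (M : Matrix (Fin (n + 1)) (Fin (n + 1)) R) :
    M.permanent = ∑ i, M i (Fin.last n) * (M.submatrix i.succAbove Fin.castSucc).permanent := by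
  have h_zero : (finRotate (n + 1)).symm 0 = Fin.last n := by
    rw [Equiv.symm_apply_eq, finRotate_last]
  have h_succ (c : Fin n) : (finRotate (n + 1)).symm c.succ = c.castSucc := by
    rw [Equiv.symm_apply_eq, finRotate_apply, Fin.coeSucc_eq_succ]
  rw [← permanent_permute_rows (finRotate (n + 1)).symm, permanent_succ_column_zero]
  simp only [submatrix_apply, id, h_zero, submatrix_submatrix]
  congr! 3
  ext a b
  simp [h_succ]

end Matrix

section PartialDerivatives

variable {α : Type*} [DecidableEq α]

theorem HasFDerivAt.hasDerivAt_comp_update [Fintype α] {F : (α → ℂ) → ℂ}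
    {F' : (α → ℂ) →L[ℂ] ℂ} {v : α → ℂ} (hF : HasFDerivAt F F' v) (i : α) :
    HasDerivAt (fun t => F (Function.update v i t)) (F' (Pi.single i 1)) (v i) := by
  rw [← Function.update_eq_self i v] at hF
  exact hF.comp_hasDerivAt (v i) (hasDerivAt_update v i (v i))

theorem pderivAt_eq_fderiv [Fintype α] {F : (α → ℂ) → ℂ} (hF : Differentiable ℂ F) (i : α) :
    pderivAt i F = fun v => fderiv ℂ F v (Pi.single i 1) :=
  funext fun v => ((hF v).hasFDerivAt.hasDerivAt_comp_update i).deriv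

theorem ContDiff.pderivAt [Fintype α] {F : (α → ℂ) → ℂ} (hF : ContDiff ℂ ∞ F) (i : α) :
    ContDiff ℂ ∞ (pderivAt i F) := by
  rw [pderivAt_eq_fderiv (hF.differentiable (by simp))]
  exact (hF.fderiv_right le_rfl).clm_apply contDiff_const

theorem pderivAt_const_mul (c : ℂ) (F : (α → ℂ) → ℂ) (i : α) :
    pderivAt i (fun v => c * F v) = fun v => c * pderivAt i F v :=
  funext fun _ => deriv_const_mul_field c

theorem pderivAt_sum [Fintype α] {ι : Type*} {u : Finset ι} {F : ι → (α → ℂ) → ℂ}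
    (hF : ∀ s ∈ u, Differentiable ℂ (F s)) (i : α) :
    pderivAt i (fun v => ∑ s ∈ u, F s v) = fun v => ∑ s ∈ u, pderivAt i (F s) v := by
  rw [pderivAt_eq_fderiv (Differentiable.fun_sum hF)]
  funext v
  rw [fderiv_fun_sum fun s hs => hF s hs v, _root_.sum_apply]
  exact Finset.sum_congr rfl fun s hs => by rw [pderivAt_eq_fderiv (hF s hs)]

noncomputable def iterPDeriv (l : List α) (F : (α → ℂ) → ℂ) : (α → ℂ) → ℂ :=
  l.foldr pderivAt F

theorem iterPDeriv_append (l₁ l₂ : List α) (F : (α → ℂ) → ℂ) :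
    iterPDeriv (l₁ ++ l₂) F = iterPDeriv l₁ (iterPDeriv l₂ F) :=
  List.foldr_append

theorem iterPDeriv_replicate (n : ℕ) (i : α) (F : (α → ℂ) → ℂ) :
    iterPDeriv (List.replicate n i) F = (pderivAt i)^[n] F := by
  induction n with
  | zero => rfl
  | succ n ih =>
    rw [Function.iterate_succ_apply', ← ih]
    rfl

theorem multiPDeriv_eq_iterPDeriv (l : List α) (p : α → ℕ) (F : (α → ℂ) → ℂ) :
    multiPDeriv l p F = iterPDeriv (l.flatMap fun i => List.replicate (p i) i) F := by
  induction l with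
  | nil => rfl
  | cons i l ih =>
    rw [multiPDeriv, List.foldr_cons, ← multiPDeriv, ih, List.flatMap_cons, iterPDeriv_append,
      iterPDeriv_replicate]

theorem ContDiff.iterPDeriv [Fintype α] {F : (α → ℂ) → ℂ} (hF : ContDiff ℂ ∞ F) (l : List α) :
    ContDiff ℂ ∞ (iterPDeriv l F) := by
  induction l with
  | nil => exact hF
  | cons i l ih => exact ih.pderivAt i

theorem iterPDeriv_const_mul (c : ℂ) (F : (α → ℂ) → ℂ) (l : List α) :
    iterPDeriv l (fun v => c * F v) = fun v => c * iterPDeriv l F v := by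
  induction l with
  | nil => rfl
  | cons i l ih => exact (congrArg (pderivAt i) ih).trans (pderivAt_const_mul c _ i)

theorem iterPDeriv_sum [Fintype α] {ι : Type*} {u : Finset ι} {F : ι → (α → ℂ) → ℂ}
    (hF : ∀ s ∈ u, ContDiff ℂ ∞ (F s)) (l : List α) :
    iterPDeriv l (fun v => ∑ s ∈ u, F s v) = fun v => ∑ s ∈ u, iterPDeriv l (F s) v := by
  induction l with
  | nil => rfl
  | cons i l ih =>
    refine (congrArg (pderivAt i) ih).trans (pderivAt_sum (fun s hs => ?_) i)
    exact ((hF s hs).iterPDeriv l).differentiable (by simp)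

theorem iterPDeriv_eqOn {s : Set (α → ℂ)} {F G : (α → ℂ) → ℂ} (hFG : s.EqOn F G) (l : List α)
    (hs : ∀ v ∈ s, ∀ i ∈ l, ∀ t, Function.update v i t ∈ s) :
    s.EqOn (iterPDeriv l F) (iterPDeriv l G) := by
  induction l with
  | nil => exact hFG
  | cons i l ih =>
    intro v hv
    have hs' : ∀ v ∈ s, ∀ j ∈ l, ∀ t, Function.update v j t ∈ s :=
      fun v hv j hj => hs v hv j (List.mem_cons_of_mem i hj)
    exact congrArg (deriv · (v i)) (funext fun t => ih hs' (hs v hv i List.mem_cons_self t))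

end PartialDerivatives

section ProductOfLinearForms

variable {α : Type*} [Fintype α] [DecidableEq α]

theorem pderivAt_prod_clm {k : ℕ} (ℓ : Fin (k + 1) → (α → ℂ) →L[ℂ] ℂ) (i : α) :
    pderivAt i (fun v => ∏ s, ℓ s v) =
      fun v => ∑ s, ℓ s (Pi.single i 1) * ∏ t, ℓ (s.succAbove t) v := by
  funext v
  have hprod := HasDerivAt.fun_finsetProd (u := Finset.univ)
    fun s _ => (ℓ s).hasFDerivAt.hasDerivAt_comp_update (v := v) i
  refine hprod.deriv.trans (Finset.sum_congr rfl fun s _ => ?_)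
  rw [smul_eq_mul, mul_comm, Function.update_eq_self, Fin.univ_succAbove _ s,
    Finset.erase_cons, Finset.prod_map, Fin.coe_succAboveEmb]

theorem iterPDeriv_prod_clm {k : ℕ} (ℓ : Fin k → (α → ℂ) →L[ℂ] ℂ) (r : Fin k → α) :
    iterPDeriv (List.ofFn r) (fun v => ∏ s, ℓ s v) =
      fun _ => (Matrix.of fun s a => ℓ s (Pi.single (r a) 1)).permanent := by
  induction k with
  | zero =>
    funext v
    simp [iterPDeriv, permanent_isEmpty]
  | succ k ih =>
    have hsmooth (s : Fin (k + 1)) :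
        ContDiff ℂ ∞ fun v => ℓ s (Pi.single (r (Fin.last k)) 1) * ∏ t, ℓ (s.succAbove t) v :=
      contDiff_const.mul (contDiff_prod fun t _ => (ℓ _).contDiff)
    rw [List.ofFn_succ', List.concat_eq_append, iterPDeriv_append]
    change iterPDeriv _ (pderivAt (r (Fin.last k)) fun v => ∏ s, ℓ s v) = _
    rw [pderivAt_prod_clm, iterPDeriv_sum fun s _ => hsmooth s]
    funext v
    rw [permanent_succ_column_last]
    refine Finset.sum_congr rfl fun s _ => ?_
    rw [iterPDeriv_const_mul, ih]
    rfl

end ProductOfLinearForms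

section Bilinear

variable {ι κ : Type*} [Fintype ι] (A : Matrix ι κ ℂ)

noncomputable def bilin [Fintype κ] (v : ι ⊕ κ → ℂ) : ℂ :=
  ∑ i, ∑ j, v (Sum.inl i) * A i j * v (Sum.inr j)

noncomputable def colForm (j : κ) : (ι ⊕ κ → ℂ) →L[ℂ] ℂ :=
  ∑ i, A i j • ContinuousLinearMap.proj (Sum.inl i)

theorem colForm_apply (j : κ) (v : ι ⊕ κ → ℂ) : colForm A j v = ∑ i, v (Sum.inl i) * A i j := by
  simp [colForm, mul_comm]

theorem colForm_single_inl [DecidableEq ι] [DecidableEq κ] (i : ι) (j : κ) :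
    colForm A j (Pi.single (Sum.inl i) 1) = A i j := by
  simp [colForm_apply, Pi.single_apply]

theorem colForm_update_inr [DecidableEq ι] [DecidableEq κ] (j j' : κ) (v : ι ⊕ κ → ℂ) (t : ℂ) :
    colForm A j (Function.update v (Sum.inr j') t) = colForm A j v := by
  simp [colForm_apply]

theorem bilin_eq_sum_colForm [Fintype κ] (v : ι ⊕ κ → ℂ) :
    bilin A v = ∑ j, colForm A j v * v (Sum.inr j) := by
  simp only [bilin, colForm_apply, Finset.sum_mul]
  exact Finset.sum_comm

variable [Fintype κ] [DecidableEq ι] [DecidableEq κ]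

theorem hasDerivAt_bilin_update_inr (v : ι ⊕ κ → ℂ) (j : κ) :
    HasDerivAt (fun t => bilin A (Function.update v (Sum.inr j) t)) (colForm A j v)
      (v (Sum.inr j)) := by
  have hcoord (j' : κ) :=
    hasDerivAt_pi.1 (hasDerivAt_update v (Sum.inr j) (v (Sum.inr j))) (Sum.inr j')
  simp_rw [bilin_eq_sum_colForm, colForm_update_inr]
  refine (HasDerivAt.fun_sum fun j' _ => (hcoord j').const_mul (colForm A j' v)).congr_deriv ?_
  simp [Pi.single_apply]

theorem iterPDeriv_map_inr_comp_bilin {g : ℂ → ℂ} (hg : Differentiable ℂ g) (l : List κ) :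
    iterPDeriv (l.map Sum.inr) (fun v => g (bilin A v)) =
      fun v => (l.map fun j => colForm A j v).prod * iteratedDeriv l.length g (bilin A v) := by
  induction l with
  | nil => simp [iterPDeriv]
  | cons j l ih =>
    change pderivAt (Sum.inr j) (iterPDeriv (l.map Sum.inr) _) = _
    rw [ih]
    funext v
    have hcomp : HasDerivAt
        (fun t => iteratedDeriv l.length g (bilin A (Function.update v (Sum.inr j) t)))
        (iteratedDeriv (l.length + 1) g (bilin A v) * colForm A j v) (v (Sum.inr j)) := by
      have hg' : HasDerivAt (iteratedDeriv l.length g)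
          (iteratedDeriv (l.length + 1) g (bilin A v)) (bilin A v) := by
        rw [iteratedDeriv_succ]
        exact (hg.contDiff.differentiable_iteratedDeriv _ (WithTop.coe_lt_top _) _).hasDerivAt
      exact hg'.comp_of_eq _ (hasDerivAt_bilin_update_inr A v j) (by rw [Function.update_eq_self])
    simp only [pderivAt, colForm_update_inr]
    rw [(hcomp.const_mul _).deriv]
    simp only [List.map_cons, List.prod_cons, List.length_cons]
    ring

theorem iterPDeriv_comp_bilin_eq_permanent {g : ℂ → ℂ} (hg : Differentiable ℂ g) {k : ℕ}
    (r : Fin k → ι) (c : Fin k → κ) :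
    iterPDeriv ((List.ofFn r).map Sum.inl ++ (List.ofFn c).map Sum.inr)
        (fun v => g (bilin A v)) (fun _ => 0) =
      (Matrix.of fun a b => A (r a) (c b)).permanent * iteratedDeriv k g 0 := by
  let yZero : Set (ι ⊕ κ → ℂ) := {v | ∀ j, v (Sum.inr j) = 0}
  have hy : yZero.EqOn (iterPDeriv ((List.ofFn c).map Sum.inr) fun v => g (bilin A v))
      (fun v => iteratedDeriv k g 0 * ∏ b, colForm A (c b) v) := by
    intro v hv
    have hbilin : bilin A v = 0 := by
      rw [bilin_eq_sum_colForm]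
      exact Finset.sum_eq_zero fun j _ => by rw [hv j, mul_zero]
    rw [iterPDeriv_map_inr_comp_bilin A hg]
    dsimp only
    rw [hbilin, List.length_ofFn, List.map_ofFn, List.prod_ofFn, mul_comm]
    rfl
  have hx : ∀ v ∈ yZero, ∀ i ∈ (List.ofFn r).map Sum.inl, ∀ t, Function.update v i t ∈ yZero := by
    intro v hv i hi t j
    obtain ⟨a, -, rfl⟩ := List.mem_map.1 hi
    simpa using hv j
  rw [iterPDeriv_append, iterPDeriv_eqOn hy _ hx (fun _ => rfl), iterPDeriv_const_mul,
    List.map_ofFn, iterPDeriv_prod_clm, ← permanent_transpose, mul_comm]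
  dsimp only
  congr 2
  ext a b
  simp [colForm_single_inl]

end Bilinear

theorem multiPDeriv_sumElim {m : ℕ} (p q : Fin m → ℕ) (F : (Fin m ⊕ Fin m → ℂ) → ℂ) :
    multiPDeriv ((List.finRange m).map Sum.inl ++ (List.finRange m).map Sum.inr)
        (Sum.elim p q) F =
      iterPDeriv ((repList p).map Sum.inl ++ (repList q).map Sum.inr) F := by
  rw [multiPDeriv_eq_iterPDeriv, List.flatMap_append]
  simp [repList, List.flatMap_map, List.map_flatMap, List.map_replicate]

theorem List.ofFn_get_cast {α : Type*} {k : ℕ} (l : List α) (h : l.length = k) :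
    List.ofFn (fun a : Fin k => l.get (Fin.cast h.symm a)) = l :=
  (List.ofFn_congr h l.get).symm.trans (List.ofFn_get l)

/-- **Derivative form of the generating-function theorem.**
The variables `x` are indexed by `Sum.inl`, the variables `y` by `Sum.inr`. -/
theorem multi_pderiv_f_bilinear (m : ℕ) (f : ℂ → ℂ) (hf : Differentiable ℂ f)
    (A : Matrix (Fin m) (Fin m) ℂ) (n : ℕ) (p q : Fin m → ℕ)
    (hp : ∑ i, p i = n) (hq : ∑ j, q j = n) :
    multiPDeriv ((List.finRange m).map Sum.inl ++ (List.finRange m).map Sum.inr)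
        (Sum.elim p q)
        (fun v => f (∑ i, ∑ j, v (Sum.inl i) * A i j * v (Sum.inr j)))
        (fun _ => 0) =
      perRep A p q * iteratedDeriv n f 0 := by
  have hpq : ∑ i, p i = ∑ j, q j := hp.trans hq.symm
  change multiPDeriv _ _ (fun v => f (bilin A v)) _ = _
  rw [multiPDeriv_sumElim, ← List.ofFn_get_cast (repList p) (repList_length p),
    ← List.ofFn_get_cast (repList q) ((repList_length q).trans hpq.symm),
    iterPDeriv_comp_bilin_eq_permanent A hf, ← hp, perRep, dif_pos hpq]
  rfl
end
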